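/- arXiv:math-ph/0612062 — 2 statements merged into one kernel-verified Lean document; each statement's English description precedes it below -/
import Mathlib

section
/- With α1 = 10^{-4}, β1 = 10^{-2}, α2 = 10^{-5}, the Pacanowski–Philander diffusivity f2(R) = α2 + α1/(1+5R) + β1/(1+5R)^3 satisfies f2(R) < 0 for all R ∈ (-3.13, -0.2) with R ≠ -0.2. -/
theorem stmt_2 :
    ∀ R : ℝ, -3.13 < R → R < -0.2 → R ≠ -0.2 →
      (10:ℝ)^(-5:ℤ) + (10:ℝ)^(-4:ℤ) / (1 + 5 * R)
        + (10:ℝ)^(-2:ℤ) / (1 + 5 * R) ^ 3 < 0 := by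
  intro R h1 h2 _
  set x : ℝ := 1 + 5 * R with hx
  have hx0 : x < 0 := by rw [hx]; nlinarith
  have hxl : (-14.65 : ℝ) < x := by rw [hx]; nlinarith
  have hne : x ≠ 0 := ne_of_lt hx0
  have hx3 : x ^ 3 < 0 := by nlinarith [sq_nonneg x, mul_pos (mul_pos (neg_pos.2 hx0) (neg_pos.2 hx0)) (neg_pos.2 hx0)]
  have hnum : (0:ℝ) < (10:ℝ)^(-5:ℤ) * x ^ 3 + (10:ℝ)^(-4:ℤ) * x ^ 2 + (10:ℝ)^(-2:ℤ) := by
    have h5 : ((10:ℝ)^(-5:ℤ)) = 1/100000 := by norm_num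
    have h4 : ((10:ℝ)^(-4:ℤ)) = 1/10000 := by norm_num
    have h2' : ((10:ℝ)^(-2:ℤ)) = 1/100 := by norm_num
    rw [h5, h4, h2']
    nlinarith [sq_nonneg (x + 14.65), sq_nonneg x, mul_pos (neg_pos.2 hx0) (neg_pos.2 hx0), sq_nonneg (x + 7)]
  have key : (10:ℝ)^(-5:ℤ) + (10:ℝ)^(-4:ℤ) / x + (10:ℝ)^(-2:ℤ) / x ^ 3
      = ((10:ℝ)^(-5:ℤ) * x ^ 3 + (10:ℝ)^(-4:ℤ) * x ^ 2 + (10:ℝ)^(-2:ℤ)) / x ^ 3 := by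
    field_simp
  rw [key]
  exact div_neg_of_pos_of_neg hnum hx3
end

section
/- For the Pacanowski–Philander model R-2-1-3 with α1, β1, α2 > 0 and Q < 0 (so C > 0), there exists at least one R ≥ 0 solving f1(R)²/f2(R) = C·R, where f1(R) = α1 + β1/(1+5R)² and f2(R) = α2 + α1/(1+5R) + β1/(1+5R)³. -/
/-! `ppF1` and `ppF2` are the eddy coefficients `f₁, f₂`; on `R ≥ 0`, `f₁ ≤ α₁ + β₁` and
`f₂ ≥ α₂`, so `k = f₁² / f₂` is continuous, nonnegative and bounded there, and the line `C * R`
must cross it by the intermediate value theorem. -/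

open Set

noncomputable def ppF1 (α1 β1 R : ℝ) : ℝ := α1 + β1 / (1 + 5 * R) ^ 2

noncomputable def ppF2 (α1 β1 α2 R : ℝ) : ℝ := α2 + α1 / (1 + 5 * R) + β1 / (1 + 5 * R) ^ 3

theorem exists_nonneg_eq_const_mul_of_bddAbove {k : ℝ → ℝ} {B C : ℝ} (hC : 0 < C)
    (hk : ContinuousOn k (Ici 0)) (hk0 : 0 ≤ k 0) (hkB : ∀ R, 0 ≤ R → k R ≤ B) :
    ∃ R, 0 ≤ R ∧ k R = C * R := by
  set M := max B 0 / C
  have hM : 0 ≤ M := by positivity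
  have hCM : C * M = max B 0 := mul_div_cancel₀ _ hC.ne'
  have hcont : ContinuousOn (fun R => k R - C * R) (Icc 0 M) :=
    (hk.mono Icc_subset_Ici_self).sub (continuousOn_const.mul continuousOn_id)
  have hmem : (0 : ℝ) ∈ Icc (k M - C * M) (k 0 - C * 0) := by
    constructor
    · rw [hCM]; linarith [hkB M hM, le_max_left B 0]
    · simpa using hk0
  obtain ⟨R, hR, hkR⟩ := intermediate_value_Icc' hM hcont hmem
  exact ⟨R, hR.1, sub_eq_zero.mp hkR⟩

section PacanowskiPhilander

variable {α1 β1 α2 R : ℝ}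

theorem one_le_one_add_five_mul (hR : 0 ≤ R) : 1 ≤ 1 + 5 * R := by linarith

theorem ppF1_nonneg (hα1 : 0 ≤ α1) (hβ1 : 0 ≤ β1) (hR : 0 ≤ R) : 0 ≤ ppF1 α1 β1 R := by
  have := one_le_one_add_five_mul hR
  unfold ppF1; positivity

theorem ppF1_le (hβ1 : 0 ≤ β1) (hR : 0 ≤ R) : ppF1 α1 β1 R ≤ α1 + β1 := by
  have hdiv : β1 / (1 + 5 * R) ^ 2 ≤ β1 :=
    div_le_self hβ1 (one_le_pow₀ (one_le_one_add_five_mul hR))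
  unfold ppF1; linarith

theorem le_ppF2 (hα1 : 0 ≤ α1) (hβ1 : 0 ≤ β1) (hR : 0 ≤ R) : α2 ≤ ppF2 α1 β1 α2 R := by
  have := one_le_one_add_five_mul hR
  have : 0 ≤ α1 / (1 + 5 * R) + β1 / (1 + 5 * R) ^ 3 := by positivity
  unfold ppF2; linarith

theorem sq_ppF1_div_ppF2_le (hα1 : 0 ≤ α1) (hβ1 : 0 ≤ β1) (hα2 : 0 < α2) (hR : 0 ≤ R) :
    ppF1 α1 β1 R ^ 2 / ppF2 α1 β1 α2 R ≤ (α1 + β1) ^ 2 / α2 :=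
  div_le_div₀ (by positivity)
    (pow_le_pow_left₀ (ppF1_nonneg hα1 hβ1 hR) (ppF1_le hβ1 hR) 2) hα2 (le_ppF2 hα1 hβ1 hR)

theorem continuousOn_sq_ppF1_div_ppF2 (hα1 : 0 ≤ α1) (hβ1 : 0 ≤ β1) (hα2 : 0 < α2) :
    ContinuousOn (fun R => ppF1 α1 β1 R ^ 2 / ppF2 α1 β1 α2 R) (Ici 0) := by
  refine ContinuousOn.div ?_ ?_ fun R hR => ?_
  · unfold ppF1
    fun_prop (disch := intro R hR; have := one_le_one_add_five_mul (mem_Ici.mp hR); positivity)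
  · unfold ppF2
    fun_prop (disch := intro R hR; have := one_le_one_add_five_mul (mem_Ici.mp hR); positivity)
  · exact (hα2.trans_le (le_ppF2 hα1 hβ1 hR)).ne'

end PacanowskiPhilander

theorem stmt_17 (α1 β1 α2 C : ℝ) (h1 : 0 < α1) (h2 : 0 < β1) (h3 : 0 < α2)
    (hC : 0 < C) :
    ∃ R : ℝ, 0 ≤ R ∧
      (α1 + β1 / (1 + 5 * R) ^ 2) ^ 2
        / (α2 + α1 / (1 + 5 * R) + β1 / (1 + 5 * R) ^ 3) = C * R := by
  have hk0 : 0 ≤ ppF1 α1 β1 0 ^ 2 / ppF2 α1 β1 α2 0 :=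
    div_nonneg (sq_nonneg _) (h3.le.trans (le_ppF2 h1.le h2.le le_rfl))
  exact exists_nonneg_eq_const_mul_of_bddAbove hC
    (continuousOn_sq_ppF1_div_ppF2 h1.le h2.le h3) hk0
    (fun R hR => sq_ppF1_div_ppF2_le h1.le h2.le h3 hR)
end
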